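/- arXiv:2302.05985 — 4 statements merged into one kernel-verified Lean document; each statement's English description precedes it below -/
import Mathlib

section
/- Let r ≥ 1 be an odd integer, N ≥ 3 an odd integer, k ≥ 1 an integer with gcd(k, N) = 1, and set α = k·π/N. Define σ(α, x) = (sin(α·x)/(α·x))^{1+r} for x > 0. Then for all integers m ≥ 1 and 1 ≤ j ≤ (N−1)/2, one has σ(α, m·N + j)/σ(α, j) = (j/(m·N + j))^{1+r} and σ(α, m·N − j)/σ(α, j) = (j/(m·N − j))^{1+r}; in particular these ratios do not depend on k. -/
open Real

private lemma sin_nat_pi_add (n : ℕ) (x : ℝ) :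
    Real.sin ((n : ℝ) * π + x) = (-1) ^ n * Real.sin x := by
  have hc : Real.cos ((n : ℝ) * π) = (-1) ^ n := by
    have := Real.cos_nat_mul_pi_sub 0 n
    simpa using this
  rw [Real.sin_add, Real.sin_nat_mul_pi, hc]; ring

private lemma sin_nat_pi_sub (n : ℕ) (x : ℝ) :
    Real.sin ((n : ℝ) * π - x) = -((-1) ^ n * Real.sin x) := by
  have := sin_nat_pi_add n (-x)
  simpa [sub_eq_add_neg] using this

/-- For odd degree `r`, odd `N ≥ 3`, `gcd(k, N) = 1` and `α = kπ/N`, the ratios of the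
sign-changing convergence factor `σ(α,x) = (sin(αx)/(αx))^{1+r}` at frequencies `mN ± j`
to its value at frequency `j` reduce to pure power ratios, independent of `k`. -/
theorem sigma_ratio_odd_degree
    (r N k : ℕ) (hr : 1 ≤ r) (hrodd : Odd r) (hN : 3 ≤ N) (hNodd : Odd N)
    (hk : 1 ≤ k) (hkN : Nat.gcd k N = 1)
    (α : ℝ) (hα : α = (k : ℝ) * π / N)
    (σ : ℝ → ℝ) (hσ : ∀ x : ℝ, 0 < x → σ x = (Real.sin (α * x) / (α * x)) ^ (1 + r)) :
    ∀ m : ℕ, 1 ≤ m → ∀ j : ℕ, 1 ≤ j → j ≤ (N - 1) / 2 →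
      σ ((m : ℝ) * N + j) / σ j = ((j : ℝ) / ((m : ℝ) * N + j)) ^ (1 + r) ∧
      σ ((m : ℝ) * N - j) / σ j = ((j : ℝ) / ((m : ℝ) * N - j)) ^ (1 + r) := by
  intro m hm j hj hj2
  set e := 1 + r with he
  have hE : Even e := by
    obtain ⟨t, ht⟩ := hrodd
    exact ⟨t + 1, by omega⟩
  have hNpos : (0 : ℝ) < N := by exact_mod_cast (by omega : 0 < N)
  have hkpos : (0 : ℝ) < k := by exact_mod_cast hk
  have hπ := Real.pi_pos
  have hαpos : 0 < α := by rw [hα]; exact div_pos (mul_pos hkpos hπ) hNpos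
  have hjN : j < N := by omega
  have hjpos : (0 : ℝ) < j := by exact_mod_cast hj
  set s := Real.sin (α * j) with hsdef
  -- s ≠ 0
  have hs : s ≠ 0 := by
    intro h0
    rw [hsdef, Real.sin_eq_zero_iff] at h0
    obtain ⟨n, hn⟩ := h0
    rw [hα] at hn
    have hNne : (N : ℝ) ≠ 0 := ne_of_gt hNpos
    have hreal : (n : ℝ) * N = (k : ℝ) * j := by
      field_simp at hn
      nlinarith [hπ]
    have hint : n * N = (k : ℤ) * j := by exact_mod_cast hreal
    have hdvd : (N : ℤ) ∣ (k : ℤ) * j := ⟨n, by linarith [hint]⟩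
    have hcop : IsCoprime (N : ℤ) (k : ℤ) := by
      rw [Int.isCoprime_iff_gcd_eq_one]
      simpa [Nat.gcd_comm] using hkN
    have hdj : (N : ℤ) ∣ (j : ℤ) := hcop.dvd_of_dvd_mul_left hdvd
    have : N ∣ j := by exact_mod_cast hdj
    have := Nat.le_of_dvd (by omega) this
    omega
  -- generic ratio computation
  have main : ∀ X : ℝ, 0 < X → (Real.sin (α * X)) ^ e = s ^ e →
      σ X / σ j = ((j : ℝ) / X) ^ e := by
    intro X hX hsin
    rw [hσ X hX, hσ j hjpos, div_pow, div_pow, hsin, ← hsdef, mul_pow, mul_pow, div_pow]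
    have hα0 : α ≠ 0 := ne_of_gt hαpos
    have hX0 : X ≠ 0 := ne_of_gt hX
    have hj0 : (j : ℝ) ≠ 0 := ne_of_gt hjpos
    have hse : s ^ e ≠ 0 := pow_ne_zero _ hs
    field_simp
  -- sign elimination
  have signpow : ∀ c : ℕ, (((-1 : ℝ) ^ c) * s) ^ e = s ^ e := by
    intro c
    rw [mul_pow, ← pow_mul]
    have : Even (c * e) := hE.mul_left c
    rw [this.neg_one_pow, one_mul]
  -- α * N = k * π
  have hαN : α * N = (k : ℝ) * π := by
    rw [hα]; field_simp
  have hplusarg : α * ((m : ℝ) * N + j) = ((k * m : ℕ) : ℝ) * π + α * j := by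
    push_cast
    have : α * ((m : ℝ) * N) = (k : ℝ) * m * π := by
      calc α * ((m : ℝ) * N) = (α * N) * m := by ring
        _ = (k : ℝ) * m * π := by rw [hαN]; ring
    nlinarith [this]
  have hminusarg : α * ((m : ℝ) * N - j) = ((k * m : ℕ) : ℝ) * π - α * j := by
    push_cast
    have : α * ((m : ℝ) * N) = (k : ℝ) * m * π := by
      calc α * ((m : ℝ) * N) = (α * N) * m := by ring
        _ = (k : ℝ) * m * π := by rw [hαN]; ring
    nlinarith [this]
  have hjm : (j : ℝ) < (m : ℝ) * N := by
    have h1 : j < m * N := by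
      have := Nat.le_mul_of_pos_left N (show 0 < m by omega)
      omega
    calc (j : ℝ) < ((m * N : ℕ) : ℝ) := by exact_mod_cast h1
      _ = (m : ℝ) * N := by push_cast; ring
  have hXp : (0 : ℝ) < (m : ℝ) * N + j := by positivity
  have hXm : (0 : ℝ) < (m : ℝ) * N - j := sub_pos.mpr hjm
  constructor
  · apply main _ hXp
    rw [hplusarg, sin_nat_pi_add, ← hsdef, signpow]
  · apply main _ hXm
    rw [hminusarg, sin_nat_pi_sub, ← hsdef, hE.neg_pow, signpow]
end

section
/- Let r ≥ 0 be an even integer, N ≥ 3 an odd integer, k ≥ 0 an integer with gcd(2k+1, N) = 1, and set α = (2k+1)·π/N. Define σ(α, x) = (sin(α·x)/(α·x))^{1+r} for x > 0. Then for all integers m ≥ 1 and 1 ≤ j ≤ (N−1)/2, one has σ(α, m·N + j)/σ(α, j) = (−1)^m·(j/(m·N + j))^{1+r} and σ(α, m·N − j)/σ(α, j) = (−1)^{m+1}·(j/(m·N − j))^{1+r}; in particular these ratios do not depend on k. -/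
/-!
Since `α N = (2k+1) π` is an odd multiple of `π`, shifting the argument of `sin (α ·)` by `m N`
multiplies it by `(-1)^m`, and reflecting `j` to `m N - j` by `(-1)^(m+1)`; as `1 + r` is odd these
signs survive the power. Coprimality of `2k+1` and `N` together with `0 < j < N` gives
`sin (α j) ≠ 0`, so the ratios are well defined.
-/

open Real

theorem Real.sin_nat_mul_pi_div_mul_ne_zero {a N j : ℕ} (hN : N ≠ 0) (hcop : Nat.Coprime a N)
    (hj : ¬ N ∣ j) : sin (a * π / N * j) ≠ 0 := by
  intro hsin
  obtain ⟨n, hn⟩ := sin_eq_zero_iff.1 hsin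
  have hNR : (N : ℝ) ≠ 0 := Nat.cast_ne_zero.2 hN
  have hreal : ((a * j : ℕ) : ℝ) = n * N := by
    push_cast
    field_simp at hn
    linarith
  have hint : ((a * j : ℕ) : ℤ) = n * N := by exact_mod_cast hreal
  have hdvd : N ∣ a * j := Int.natCast_dvd_natCast.1 ⟨n, by rw [hint, mul_comm]⟩
  exact hj (hcop.symm.dvd_of_dvd_mul_left hdvd)

section OddMultipleOfPi

variable {α : ℝ} {N n : ℕ} (hαN : α * N = n * π) (hn : Odd n)
include hαN hn

theorem Real.sin_mul_nat_mul_add (m : ℕ) (x : ℝ) :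
    sin (α * (m * N + x)) = (-1) ^ m * sin (α * x) := by
  have harg : α * (m * N + x) = α * x + (n * m : ℕ) * π := by
    push_cast; linear_combination (m : ℝ) * hαN
  rw [harg, sin_add_nat_mul_pi, pow_mul, hn.neg_one_pow]

theorem Real.sin_mul_nat_mul_sub (m : ℕ) (x : ℝ) :
    sin (α * (m * N - x)) = (-1) ^ (m + 1) * sin (α * x) := by
  have harg : α * (m * N - x) = (n * m : ℕ) * π - α * x := by
    push_cast; linear_combination (m : ℝ) * hαN
  rw [harg, sin_nat_mul_pi_sub, pow_mul, hn.neg_one_pow, pow_succ]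
  ring

end OddMultipleOfPi

theorem Real.sinc_pow_div_sinc_pow_of_sin_eq {p s : ℕ} (hp : Odd p) {α x y : ℝ}
    (hα : α ≠ 0) (hx : x ≠ 0) (hy : y ≠ 0) (hsin : sin (α * x) ≠ 0)
    (h : sin (α * y) = (-1) ^ s * sin (α * x)) :
    (sin (α * y) / (α * y)) ^ p / (sin (α * x) / (α * x)) ^ p = (-1) ^ s * (x / y) ^ p := by
  have hratio : sin (α * y) / (α * y) / (sin (α * x) / (α * x)) = (-1) ^ s * (x / y) := by
    rw [h]; field_simp
  rw [← div_pow, hratio, mul_pow, ← pow_mul, mul_comm s p, pow_mul, hp.neg_one_pow]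

theorem sigma_ratio_even_degree_general
    (r N k : ℕ) (hreven : Even r)
    (hkN : Nat.gcd (2 * k + 1) N = 1)
    (α : ℝ) (hα : α = ((2 * k + 1 : ℕ) : ℝ) * π / N)
    (σ : ℝ → ℝ) (hσ : ∀ x : ℝ, 0 < x → σ x = (Real.sin (α * x) / (α * x)) ^ (1 + r)) :
    ∀ m : ℕ, 1 ≤ m → ∀ j : ℕ, 1 ≤ j → j ≤ (N - 1) / 2 →
      σ ((m : ℝ) * N + j) / σ j = (-1 : ℝ) ^ m * ((j : ℝ) / ((m : ℝ) * N + j)) ^ (1 + r) ∧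
      σ ((m : ℝ) * N - j) / σ j =
        (-1 : ℝ) ^ (m + 1) * ((j : ℝ) / ((m : ℝ) * N - j)) ^ (1 + r) := by
  intro m hm j hj hjN
  have hNpos : 0 < N := by omega
  have hjpos : (0 : ℝ) < j := by exact_mod_cast hj
  have hjlt : (j : ℝ) < m * N := by
    have : j < m * N := (by omega : j < N).trans_le (Nat.le_mul_of_pos_left N hm)
    exact_mod_cast this
  have hαpos : 0 < α := by rw [hα]; positivity
  have hαN : α * N = ((2 * k + 1 : ℕ) : ℝ) * π := by
    rw [hα]; field_simp
  have hodd : Odd (2 * k + 1) := odd_two_mul_add_one k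
  have hsin : sin (α * j) ≠ 0 := by
    rw [hα]
    exact sin_nat_mul_pi_div_mul_ne_zero hNpos.ne' hkN fun hdvd => by
      have := Nat.le_of_dvd (by omega) hdvd; omega
  have hp : Odd (1 + r) := hreven.one_add
  rw [hσ _ hjpos, hσ _ (by positivity), hσ _ (by linarith)]
  exact ⟨sinc_pow_div_sinc_pow_of_sin_eq hp hαpos.ne' hjpos.ne' (by positivity) hsin
      (sin_mul_nat_mul_add hαN hodd m j),
    sinc_pow_div_sinc_pow_of_sin_eq hp hαpos.ne' hjpos.ne' (by linarith) hsin
      (sin_mul_nat_mul_sub hαN hodd m j)⟩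

/-- For even degree `r`, odd `N ≥ 3`, `gcd(2k+1, N) = 1` and `α = (2k+1)π/N`, the ratios of
the sign-changing convergence factor `σ(α,x) = (sin(αx)/(αx))^{1+r}` at frequencies `mN ± j`
to its value at frequency `j` are `(-1)^m (j/(mN+j))^{1+r}` and `(-1)^{m+1} (j/(mN-j))^{1+r}`,
independent of `k`. -/
theorem sigma_ratio_even_degree
    (r N k : ℕ) (hreven : Even r) (hN : 3 ≤ N) (hNodd : Odd N)
    (hkN : Nat.gcd (2 * k + 1) N = 1)
    (α : ℝ) (hα : α = ((2 * k + 1 : ℕ) : ℝ) * π / N)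
    (σ : ℝ → ℝ) (hσ : ∀ x : ℝ, 0 < x → σ x = (Real.sin (α * x) / (α * x)) ^ (1 + r)) :
    ∀ m : ℕ, 1 ≤ m → ∀ j : ℕ, 1 ≤ j → j ≤ (N - 1) / 2 →
      σ ((m : ℝ) * N + j) / σ j = (-1 : ℝ) ^ m * ((j : ℝ) / ((m : ℝ) * N + j)) ^ (1 + r) ∧
      σ ((m : ℝ) * N - j) / σ j =
        (-1 : ℝ) ^ (m + 1) * ((j : ℝ) / ((m : ℝ) * N - j)) ^ (1 + r) :=
  sigma_ratio_even_degree_general r N k hreven hkN α hα σ hσ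
end

section
/- Let N ≥ 3 be an odd integer, k, l ∈ {1, …, N}, and set t_j = 2π(j−1)/N for j = 1, …, N. Let r ≥ 1 be an integer and γ₁, γ₂, γ₃ real numbers. For 1 ≤ j ≤ (N−1)/2 define h_j = γ₁·j^{-(1+r)} + Σ_{m=1}^{∞} (γ₂·(−1)^{1+r}·(mN−j)^{-(1+r)} + γ₃·(mN+j)^{-(1+r)}) and c_j(t) = γ₁·j^{-(1+r)}·cos(j(t−t_k)) + Σ_{m=1}^{∞} (γ₂·(−1)^{1+r}·(mN−j)^{-(1+r)}·cos((mN−j)(t−t_k)) + γ₃·(mN+j)^{-(1+r)}·cos((mN+j)(t−t_k))), and assume h_j ≠ 0 for all such j. Then the fundamental trigonometric spline st_k(t) = (1/N)·(1 + 2·Σ_{j=1}^{(N−1)/2} c_j(t)/h_j) satisfies st_k(t_l) = 1 if l = k and st_k(t_l) = 0 if l ≠ k. -/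
open Real

private lemma sum_Icc_one_eq_range (f : ℕ → ℝ) (M : ℕ) :
    ∑ j ∈ Finset.Icc 1 M, f j = ∑ i ∈ Finset.range M, f (i + 1) := by
  induction M with
  | zero => simp
  | succ n ih =>
      rw [Finset.sum_range_succ, ← ih, Finset.sum_Icc_succ_top (by omega)]

private lemma telescope_cos (θ : ℝ) (m : ℕ) :
    2 * Real.sin (θ / 2) * ∑ j ∈ Finset.Icc 1 m, Real.cos ((j : ℝ) * θ) =
      Real.sin ((m : ℝ) * θ + θ / 2) - Real.sin (θ / 2) := by
  induction m with
  | zero => simp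
  | succ n ih =>
      rw [Finset.sum_Icc_succ_top (by omega), mul_add, ih]
      have h1 : Real.sin (((n : ℝ) + 1) * θ + θ / 2) - Real.sin ((n : ℝ) * θ + θ / 2) =
          2 * Real.sin (θ / 2) * Real.cos (((n : ℝ) + 1) * θ) := by
        rw [Real.sin_sub_sin]
        congr 1
        · congr 1; ring
        · congr 1; ring
      push_cast
      linarith [h1]

/-- The fundamental trigonometric spline `st_k` of degree `r` with power convergence factor
and parameter vector `Γ = {γ₁, γ₂, γ₃}` on the uniform grid `t_j = 2π(j-1)/N` satisfies the
interpolation property `st_k(t_l) = δ_{lk}`. -/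
theorem fundamental_spline_interpolation
    (N : ℕ) (hN : 3 ≤ N) (hNodd : Odd N) (k l : ℕ)
    (hk : k ∈ Finset.Icc 1 N) (hl : l ∈ Finset.Icc 1 N)
    (t : ℕ → ℝ) (ht : ∀ j : ℕ, t j = 2 * π * ((j : ℝ) - 1) / N)
    (r : ℕ) (hr : 1 ≤ r) (γ₁ γ₂ γ₃ : ℝ)
    (h : ℕ → ℝ)
    (hh : ∀ j : ℕ, h j =
      γ₁ / (j : ℝ) ^ (1 + r) +
        ∑' m : ℕ,
          (γ₂ * (-1 : ℝ) ^ (1 + r) / (((m : ℝ) + 1) * N - j) ^ (1 + r) +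
            γ₃ / (((m : ℝ) + 1) * N + j) ^ (1 + r)))
    (c : ℕ → ℝ → ℝ)
    (hc : ∀ (j : ℕ) (x : ℝ), c j x =
      γ₁ / (j : ℝ) ^ (1 + r) * Real.cos (j * (x - t k)) +
        ∑' m : ℕ,
          (γ₂ * (-1 : ℝ) ^ (1 + r) / (((m : ℝ) + 1) * N - j) ^ (1 + r) *
              Real.cos ((((m : ℝ) + 1) * N - j) * (x - t k)) +
            γ₃ / (((m : ℝ) + 1) * N + j) ^ (1 + r) *
              Real.cos ((((m : ℝ) + 1) * N + j) * (x - t k))))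
    (hne : ∀ j : ℕ, 1 ≤ j → j ≤ (N - 1) / 2 → h j ≠ 0)
    (st : ℝ → ℝ)
    (hst : ∀ x : ℝ, st x =
      (1 / (N : ℝ)) * (1 + 2 * ∑ j ∈ Finset.Icc 1 ((N - 1) / 2), c j x / h j)) :
    st (t l) = if l = k then 1 else 0 := by
  obtain ⟨m, hm⟩ := hNodd
  have hN0 : (0 : ℝ) < N := by positivity
  simp only [Finset.mem_Icc] at hk hl
  set θ : ℝ := t l - t k with hθ
  set d : ℤ := (l : ℤ) - (k : ℤ) with hd
  have hNθ : (N : ℝ) * θ = 2 * π * d := by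
    rw [hθ, ht l, ht k, hd]
    field_simp
    push_cast
    ring
  -- Each cosine in the series collapses to cos (j θ).
  have hcos_sub : ∀ (mm j : ℕ),
      Real.cos ((((mm : ℝ) + 1) * N - j) * θ) = Real.cos (j * θ) := by
    intro mm j
    have : (((mm : ℝ) + 1) * N - j) * θ = -(j * θ) + ((((mm : ℤ) + 1) * d : ℤ) : ℝ) * (2 * π) := by
      have : (((mm : ℝ) + 1) * N - j) * θ = ((mm : ℝ) + 1) * ((N : ℝ) * θ) - j * θ := by ring
      rw [this, hNθ]; push_cast; ring
    rw [this, Real.cos_add_int_mul_two_pi, Real.cos_neg]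
  have hcos_add : ∀ (mm j : ℕ),
      Real.cos ((((mm : ℝ) + 1) * N + j) * θ) = Real.cos (j * θ) := by
    intro mm j
    have : (((mm : ℝ) + 1) * N + j) * θ = (j * θ) + ((((mm : ℤ) + 1) * d : ℤ) : ℝ) * (2 * π) := by
      have : (((mm : ℝ) + 1) * N + j) * θ = ((mm : ℝ) + 1) * ((N : ℝ) * θ) + j * θ := by ring
      rw [this, hNθ]; push_cast; ring
    rw [this, Real.cos_add_int_mul_two_pi]
  -- c j (t l) = h j * cos (j θ)
  have hcj : ∀ j : ℕ, c j (t l) = h j * Real.cos (j * θ) := by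
    intro j
    rw [hc j (t l), hh j, ← hθ]
    have : (∑' mm : ℕ,
        (γ₂ * (-1 : ℝ) ^ (1 + r) / (((mm : ℝ) + 1) * N - j) ^ (1 + r) *
            Real.cos ((((mm : ℝ) + 1) * N - j) * θ) +
          γ₃ / (((mm : ℝ) + 1) * N + j) ^ (1 + r) *
            Real.cos ((((mm : ℝ) + 1) * N + j) * θ))) =
        (∑' mm : ℕ,
          (γ₂ * (-1 : ℝ) ^ (1 + r) / (((mm : ℝ) + 1) * N - j) ^ (1 + r) +
            γ₃ / (((mm : ℝ) + 1) * N + j) ^ (1 + r))) * Real.cos (j * θ) := by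
      rw [← tsum_mul_right]
      congr 1
      funext mm
      rw [hcos_sub mm j, hcos_add mm j]
      ring
    rw [this]
    ring
  have hsum : st (t l) =
      (1 / (N : ℝ)) * (1 + 2 * ∑ j ∈ Finset.Icc 1 ((N - 1) / 2), Real.cos (j * θ)) := by
    rw [hst]
    congr 2
    congr 1
    apply Finset.sum_congr rfl
    intro j hj
    simp only [Finset.mem_Icc] at hj
    rw [hcj j, mul_div_assoc, mul_comm]
    exact div_mul_cancel₀ _ (hne j hj.1 hj.2)
  have hM : (N - 1) / 2 = m := by omega
  by_cases hlk : l = k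
  · subst hlk
    have hθ0 : θ = 0 := by rw [hθ]; ring
    simp only [hθ0, mul_zero, Real.cos_zero] at hsum
    rw [hsum, if_pos rfl, Finset.sum_const, Nat.card_Icc, hM]
    have : (N : ℝ) ≠ 0 := ne_of_gt hN0
    field_simp
    push_cast [hm]
    ring
  · rw [if_neg hlk]
    -- sin (θ/2) ≠ 0
    have hd0 : d ≠ 0 := by
      simp only [hd, sub_ne_zero]
      exact_mod_cast hlk
    have hdlt : |d| < N := by
      rw [abs_lt]; omega
    have hsin : Real.sin (θ / 2) ≠ 0 := by
      intro hs
      rw [Real.sin_eq_zero_iff] at hs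
      obtain ⟨n, hn⟩ := hs
      have hθval : θ / 2 = π * d / N := by
        rw [eq_div_iff (ne_of_gt hN0)]
        have := hNθ
        nlinarith [hNθ]
      rw [hθval] at hn
      have hπ : π ≠ 0 := Real.pi_ne_zero
      have : (n : ℝ) * N = d := by
        field_simp at hn
        nlinarith [hn, Real.pi_pos]
      have hint : n * (N : ℤ) = d := by exact_mod_cast this
      have hNZ : (3 : ℤ) ≤ (N : ℤ) := by exact_mod_cast hN
      have hd1 : -(N : ℤ) < d := by omega
      have hd2 : d < (N : ℤ) := by omega
      rcases lt_trichotomy n 0 with h0 | h0 | h0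
      · have hn1 : n ≤ -1 := by omega
        nlinarith [hint, hd1, hNZ]
      · rw [h0] at hint; simp at hint; omega
      · have hn1 : 1 ≤ n := by omega
        nlinarith [hint, hd2, hNZ]
    -- sin((m + 1/2)θ) = sin(π d) = 0
    have hsin0 : Real.sin ((m : ℝ) * θ + θ / 2) = 0 := by
      have harg : (m : ℝ) * θ + θ / 2 = (d : ℝ) * π := by
        have hNm : (N : ℝ) = 2 * m + 1 := by exact_mod_cast congrArg (Nat.cast : ℕ → ℝ) hm
        have h2 : (2 * (m : ℝ) + 1) * θ = 2 * π * d := by rw [← hNm]; exact hNθ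
        nlinarith [h2]
      rw [harg]
      exact Real.sin_int_mul_pi d
    have hsumval : (∑ j ∈ Finset.Icc 1 ((N - 1) / 2), Real.cos (j * θ)) = -1 / 2 := by
      have h2 : (2 * Real.sin (θ / 2)) ≠ 0 := mul_ne_zero two_ne_zero hsin
      rw [hM]
      apply mul_left_cancel₀ h2
      rw [telescope_cos θ m, hsin0]
      ring
    rw [hsum, hsumval]
    ring
end

section
/- Let N ≥ 3 be an odd integer, 1 ≤ j ≤ (N−1)/2 an integer, a, t real numbers, s ∈ {0, 1, 2}, and γ₁, γ₂, γ₃ real numbers with γ₁ ≠ 0. For each integer r ≥ 1 define h_j(r) = γ₁ + Σ_{m=1}^{∞} (−1)^{m·s}·(γ₂·(−1)^{1+r}·(j/(mN−j))^{1+r} + γ₃·(j/(mN+j))^{1+r}) and c_j(r,t) = γ₁·cos(j(t−a)) + Σ_{m=1}^{∞} (−1)^{m·s}·(γ₂·(−1)^{1+r}·(j/(mN−j))^{1+r}·cos((mN−j)(t−a)) + γ₃·(j/(mN+j))^{1+r}·cos((mN+j)(t−a))). Then lim_{r→∞} c_j(r,t)/h_j(r) = cos(j(t−a)). -/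
/-!
Every term of the two tails is bounded by `(|γ₂| + |γ₃|) x_m^r` with `x_m = j/((m+1)N - j)`,
which lies in `[0, 1)` because `2j < N` and is at most `1/(m+1)`. Hence each term tends to `0`
as `r → ∞`, while for `r ≥ 2` all terms are dominated by a multiple of `1/(m+1)^2`; by dominated
convergence both tails tend to `0`, so `c r → γ₁ cos(j(t-a))` and `h r → γ₁ ≠ 0`.
-/

open Real Filter Topology

theorem tendsto_tsum_of_abs_le_mul_pow {x : ℕ → ℝ} (hx0 : ∀ m, 0 ≤ x m) (hx1 : ∀ m, x m < 1)
    (hsum : Summable fun m => x m ^ 2) {u : ℕ → ℕ → ℝ} (C : ℝ)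
    (hu : ∀ r m, |u r m| ≤ C * x m ^ r) :
    Tendsto (fun r => ∑' m, u r m) atTop (𝓝 0) := by
  have hlim : Tendsto (fun r => ∑' m, u r m) atTop (𝓝 (∑' _ : ℕ, (0 : ℝ))) := by
    refine tendsto_tsum_of_dominated_convergence (hsum.mul_left C) (fun m => ?_) ?_
    · refine squeeze_zero_norm (fun r => hu r m) ?_
      simpa using (tendsto_pow_atTop_nhds_zero_of_lt_one (hx0 m) (hx1 m)).const_mul C
    · filter_upwards [eventually_ge_atTop 2] with r hr m
      have hC : 0 ≤ C := by simpa using (abs_nonneg _).trans (hu 0 m)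
      calc ‖u r m‖ ≤ C * x m ^ r := hu r m
        _ ≤ C * x m ^ 2 :=
          mul_le_mul_of_nonneg_left (pow_le_pow_of_le_one (hx0 m) (hx1 m).le hr) hC
  simpa using hlim

section Ratios

variable {j N : ℝ}

theorem lt_succ_mul_sub (hj : 0 ≤ j) (hjN : 2 * j < N) (m : ℕ) : j < (m + 1) * N - j := by
  have : N ≤ (m + 1) * N := le_mul_of_one_le_left (by linarith) (by simp)
  linarith

theorem div_succ_mul_sub_nonneg (hj : 0 ≤ j) (hjN : 2 * j < N) (m : ℕ) :
    0 ≤ j / ((m + 1) * N - j) :=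
  div_nonneg hj (hj.trans (lt_succ_mul_sub hj hjN m).le)

theorem div_succ_mul_sub_lt_one (hj : 0 ≤ j) (hjN : 2 * j < N) (m : ℕ) :
    j / ((m + 1) * N - j) < 1 :=
  (div_lt_one (hj.trans_lt (lt_succ_mul_sub hj hjN m))).mpr (lt_succ_mul_sub hj hjN m)

theorem div_succ_mul_sub_le_inv_succ (hj : 0 ≤ j) (hjN : 2 * j < N) (m : ℕ) :
    j / ((m + 1) * N - j) ≤ 1 / (m + 1) := by
  have hd := lt_succ_mul_sub hj hjN m
  rw [div_le_div_iff₀ (hj.trans_lt hd) (by positivity)]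
  nlinarith [(m.cast_nonneg : (0 : ℝ) ≤ m)]

theorem div_succ_mul_add_nonneg (hj : 0 ≤ j) (hjN : 2 * j < N) (m : ℕ) :
    0 ≤ j / ((m + 1) * N + j) :=
  div_nonneg hj (by linarith [lt_succ_mul_sub hj hjN m])

theorem div_succ_mul_add_le_div_succ_mul_sub (hj : 0 ≤ j) (hjN : 2 * j < N) (m : ℕ) :
    j / ((m + 1) * N + j) ≤ j / ((m + 1) * N - j) :=
  div_le_div_of_nonneg_left hj (hj.trans_lt (lt_succ_mul_sub hj hjN m)) (by linarith)

theorem summable_sq_div_succ_mul_sub (hj : 0 ≤ j) (hjN : 2 * j < N) :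
    Summable fun m : ℕ => (j / ((m + 1) * N - j)) ^ 2 := by
  have hinv : Summable fun m : ℕ => (1 / ((m : ℝ) + 1)) ^ 2 := by
    simpa [Nat.cast_add] using
      (summable_nat_add_iff 1).mpr (summable_one_div_nat_pow.mpr one_lt_two)
  refine hinv.of_nonneg_of_le (fun m => sq_nonneg _) (fun m => ?_)
  exact pow_le_pow_left₀ (div_succ_mul_sub_nonneg hj hjN m)
    (div_succ_mul_sub_le_inv_succ hj hjN m) 2

end Ratios

theorem abs_mul_add_pow_le {A B e σ u v : ℝ} (γ₂ γ₃ : ℝ) (n : ℕ) (hB0 : 0 ≤ B)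
    (hBA : B ≤ A) (hA1 : A ≤ 1) (he : |e| ≤ 1) (hσ : |σ| ≤ 1) (hu : |u| ≤ 1) (hv : |v| ≤ 1) :
    |e * (γ₂ * σ * A ^ (1 + n) * u + γ₃ * B ^ (1 + n) * v)| ≤ (|γ₂| + |γ₃|) * A ^ n := by
  have hA0 : 0 ≤ A := hB0.trans hBA
  have hApow : A ^ (1 + n) ≤ A ^ n := by
    rw [pow_add, pow_one]; exact mul_le_of_le_one_left (pow_nonneg hA0 n) hA1
  have hBpow : B ^ (1 + n) ≤ A ^ n := (pow_le_pow_left₀ hB0 hBA _).trans hApow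
  have h₂ : |γ₂ * σ * A ^ (1 + n) * u| ≤ |γ₂| * A ^ n := by
    rw [abs_mul, abs_mul, abs_mul, abs_of_nonneg (pow_nonneg hA0 _)]
    calc |γ₂| * |σ| * A ^ (1 + n) * |u| ≤ |γ₂| * 1 * A ^ n * 1 := by gcongr
      _ = |γ₂| * A ^ n := by ring
  have h₃ : |γ₃ * B ^ (1 + n) * v| ≤ |γ₃| * A ^ n := by
    rw [abs_mul, abs_mul, abs_of_nonneg (pow_nonneg hB0 _)]
    calc |γ₃| * B ^ (1 + n) * |v| ≤ |γ₃| * A ^ n * 1 := by gcongr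
      _ = |γ₃| * A ^ n := mul_one _
  calc |e * (γ₂ * σ * A ^ (1 + n) * u + γ₃ * B ^ (1 + n) * v)|
      ≤ 1 * (|γ₂ * σ * A ^ (1 + n) * u| + |γ₃ * B ^ (1 + n) * v|) := by
        rw [abs_mul]; gcongr; exact abs_add_le _ _
    _ ≤ (|γ₂| + |γ₃|) * A ^ n := by linarith

theorem normalized_term_tendsto_cos_general
    (N j : ℕ) (hN : 3 ≤ N) (hj2 : j ≤ (N - 1) / 2)
    (a t : ℝ) (s : ℕ)
    (γ₁ γ₂ γ₃ : ℝ) (hγ₁ : γ₁ ≠ 0)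
    (h : ℕ → ℝ)
    (hh : ∀ r : ℕ, h r =
      γ₁ + ∑' m : ℕ, (-1 : ℝ) ^ ((m + 1) * s) *
        (γ₂ * (-1 : ℝ) ^ (1 + r) * ((j : ℝ) / (((m : ℝ) + 1) * N - j)) ^ (1 + r) +
          γ₃ * ((j : ℝ) / (((m : ℝ) + 1) * N + j)) ^ (1 + r)))
    (c : ℕ → ℝ)
    (hc : ∀ r : ℕ, c r =
      γ₁ * Real.cos (j * (t - a)) +
        ∑' m : ℕ, (-1 : ℝ) ^ ((m + 1) * s) *
          (γ₂ * (-1 : ℝ) ^ (1 + r) * ((j : ℝ) / (((m : ℝ) + 1) * N - j)) ^ (1 + r) *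
              Real.cos ((((m : ℝ) + 1) * N - j) * (t - a)) +
            γ₃ * ((j : ℝ) / (((m : ℝ) + 1) * N + j)) ^ (1 + r) *
              Real.cos ((((m : ℝ) + 1) * N + j) * (t - a)))) :
    Tendsto (fun r : ℕ => c r / h r) atTop (nhds (Real.cos (j * (t - a)))) := by
  have hj : (0 : ℝ) ≤ j := j.cast_nonneg
  have hjN : 2 * (j : ℝ) < N := by exact_mod_cast (by omega : 2 * j < N)
  have hsign (k : ℕ) : |(-1 : ℝ) ^ k| ≤ 1 := (abs_neg_one_pow k).le
  have htail (u : ℕ → ℕ → ℝ) := tendsto_tsum_of_abs_le_mul_pow (u := u)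
    (div_succ_mul_sub_nonneg hj hjN) (div_succ_mul_sub_lt_one hj hjN)
    (summable_sq_div_succ_mul_sub hj hjN) (|γ₂| + |γ₃|)
  have hB0 := div_succ_mul_add_nonneg hj hjN
  have hBA := div_succ_mul_add_le_div_succ_mul_sub hj hjN
  have hA1 := fun m => (div_succ_mul_sub_lt_one hj hjN m).le
  have hc_lim : Tendsto c atTop (𝓝 (γ₁ * Real.cos (j * (t - a)) + 0)) := by
    simp only [funext hc]
    exact tendsto_const_nhds.add <| htail _ fun r m =>
      abs_mul_add_pow_le γ₂ γ₃ r (hB0 m) (hBA m) (hA1 m) (hsign _) (hsign _)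
        (abs_cos_le_one _) (abs_cos_le_one _)
  have hh_lim : Tendsto h atTop (𝓝 (γ₁ + 0)) := by
    simp only [funext hh]
    exact tendsto_const_nhds.add <| htail _ fun r m => by
      simpa only [mul_one] using abs_mul_add_pow_le γ₂ γ₃ r (hB0 m) (hBA m) (hA1 m)
        (hsign ((m + 1) * s)) (hsign (1 + r)) abs_one.le abs_one.le
  have hlim := hc_lim.div hh_lim (by rwa [add_zero])
  rwa [add_zero, add_zero, mul_div_cancel_left₀ _ hγ₁] at hlim

/-- As the degree `r → ∞`, the normalized terms `c_j(r,t)/h_j(r)` of the fundamental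
trigonometric spline converge to `cos(j(t-a))`, i.e. the splines converge to the
interpolating trigonometric polynomial. -/
theorem normalized_term_tendsto_cos
    (N j : ℕ) (hN : 3 ≤ N) (hNodd : Odd N) (hj1 : 1 ≤ j) (hj2 : j ≤ (N - 1) / 2)
    (a t : ℝ) (s : ℕ) (hs : s = 0 ∨ s = 1 ∨ s = 2)
    (γ₁ γ₂ γ₃ : ℝ) (hγ₁ : γ₁ ≠ 0)
    (h : ℕ → ℝ)
    (hh : ∀ r : ℕ, h r =
      γ₁ + ∑' m : ℕ, (-1 : ℝ) ^ ((m + 1) * s) *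
        (γ₂ * (-1 : ℝ) ^ (1 + r) * ((j : ℝ) / (((m : ℝ) + 1) * N - j)) ^ (1 + r) +
          γ₃ * ((j : ℝ) / (((m : ℝ) + 1) * N + j)) ^ (1 + r)))
    (c : ℕ → ℝ)
    (hc : ∀ r : ℕ, c r =
      γ₁ * Real.cos (j * (t - a)) +
        ∑' m : ℕ, (-1 : ℝ) ^ ((m + 1) * s) *
          (γ₂ * (-1 : ℝ) ^ (1 + r) * ((j : ℝ) / (((m : ℝ) + 1) * N - j)) ^ (1 + r) *
              Real.cos ((((m : ℝ) + 1) * N - j) * (t - a)) +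
            γ₃ * ((j : ℝ) / (((m : ℝ) + 1) * N + j)) ^ (1 + r) *
              Real.cos ((((m : ℝ) + 1) * N + j) * (t - a)))) :
    Tendsto (fun r : ℕ => c r / h r) atTop (nhds (Real.cos (j * (t - a)))) :=
  normalized_term_tendsto_cos_general N j hN hj2 a t s γ₁ γ₂ γ₃ hγ₁ h hh c hc
end
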